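/- Let P ⊆ ℝ^d be a rational polytope with denominator D and let c ∈ ℤ^d be nonzero. Then there exists an integer N such that for all integers t₁, t₂ ≥ N with t₁ ≡ t₂ (mod D) and with t₁P ∩ ℤ^d and t₂P ∩ ℤ^d both nonempty, one has I_M(t₁P, c) = I_M(t₂P, c) and I_m(t₁P, c) = I_m(t₂P, c); that is, the additive integrality gaps of nP in direction c are eventually periodic in n with period dividing D. -/

import Mathlib

open Pointwise

/-- The set of integer points of `K ⊆ ℝ^d`, as integer vectors. -/
def intPts {d : ℕ} (K : Set (Fin d → ℝ)) : Set (Fin d → ℤ) :=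
  {x | (fun i => (x i : ℝ)) ∈ K}

/-- The arithmetic range of `K` in direction `c`. -/
def AR {d : ℕ} (c : Fin d → ℤ) (K : Set (Fin d → ℝ)) : Set ℤ :=
  {n | ∃ x ∈ intPts K, n = ∑ i, c i * x i}

/-- `P ⊆ ℝ^d` is a rational polytope: the convex hull of finitely many rational points. -/
def IsRatPolytope {d : ℕ} (P : Set (Fin d → ℝ)) : Prop :=
  ∃ V : Finset (Fin d → ℚ), V.Nonempty ∧
    P = convexHull ℝ ((fun v : Fin d → ℚ => (fun i => ((v i : ℚ) : ℝ))) '' (V : Set (Fin d → ℚ)))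

/-- `Q ⊆ ℝ^d` is an integral polytope: the convex hull of finitely many integer points. -/
def IsIntPolytope {d : ℕ} (Q : Set (Fin d → ℝ)) : Prop :=
  ∃ V : Finset (Fin d → ℤ), V.Nonempty ∧
    Q = convexHull ℝ ((fun v : Fin d → ℤ => (fun i => ((v i : ℤ) : ℝ))) '' (V : Set (Fin d → ℤ)))

/-- `D` is the denominator of `P`: the least positive integer such that `DP` is integral. -/
def IsDenom {d : ℕ} (P : Set (Fin d → ℝ)) (D : ℕ) : Prop :=
  0 < D ∧ IsIntPolytope ((D : ℝ) • P) ∧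
    ∀ D' : ℕ, 0 < D' → IsIntPolytope ((D' : ℝ) • P) → D ≤ D'

/-- The maximum additive integrality gap
`I_M(K, c) = max_{x ∈ K} c·x − max_{x ∈ K ∩ ℤ^d} c·x`. -/
noncomputable def IMax {d : ℕ} (K : Set (Fin d → ℝ)) (c : Fin d → ℤ) : ℝ :=
  sSup ((fun x : Fin d → ℝ => ∑ i, (c i : ℝ) * x i) '' K) - ((sSup (AR c K) : ℤ) : ℝ)

/-- The minimum additive integrality gap
`I_m(K, c) = min_{x ∈ K ∩ ℤ^d} c·x − min_{x ∈ K} c·x`. -/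
noncomputable def IMin {d : ℕ} (K : Set (Fin d → ℝ)) (c : Fin d → ℤ) : ℝ :=
  ((sInf (AR c K) : ℤ) : ℝ) - sInf ((fun x : Fin d → ℝ => ∑ i, (c i : ℝ) * x i) '' K)

/-! If `DP` is an integral polytope then `(t + D)P = tP + DP`. Over this Minkowski sum the real
maximum of `c ⬝ x` grows by exactly its maximum over `DP`, an integer attained at a lattice vertex,
while the maximum over lattice points grows by at least as much. So along a residue class
`t₀ + kD` the gap `I_M` is a nonnegative sequence that drops by natural numbers, hence eventually
constant; `I_m(K, c) = I_M(K, -c)` reduces the minimum to the maximum. -/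

variable {d : ℕ}

theorem Int.sSup_neg (s : Set ℤ) : sSup (-s) = -sInf s := by
  obtain rfl | hn := s.eq_empty_or_nonempty
  · simp
  by_cases hb : BddBelow s
  · rw [csSup_neg hn hb]
  · rw [Int.csInf_of_not_bddBelow hb, Int.csSup_of_not_bddAbove (bddAbove_neg.not.2 hb),
      neg_zero]

def dotL (c : Fin d → ℤ) : (Fin d → ℝ) →ₗ[ℝ] ℝ where
  toFun x := ∑ i, (c i : ℝ) * x i
  map_add' x y := by simp [mul_add, Finset.sum_add_distrib]
  map_smul' r x := by simp [Finset.mul_sum, mul_left_comm]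

theorem IMax_eq (K : Set (Fin d → ℝ)) (c : Fin d → ℤ) :
    IMax K c = sSup (dotL c '' K) - ((sSup (AR c K) : ℤ) : ℝ) :=
  rfl

theorem dotL_intCast (c x : Fin d → ℤ) :
    dotL c (fun i => (x i : ℝ)) = ((∑ i, c i * x i : ℤ) : ℝ) := by
  simp [dotL]

theorem image_dotL_neg (c : Fin d → ℤ) (K : Set (Fin d → ℝ)) :
    dotL (-c) '' K = -(dotL c '' K) := by
  rw [← Set.image_neg_eq_neg, Set.image_image]
  congr! 1 with x
  simp [dotL]

theorem AR_neg (c : Fin d → ℤ) (K : Set (Fin d → ℝ)) : AR (-c) K = -AR c K := by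
  ext n
  simp only [AR, Set.mem_neg, Set.mem_ofPred_eq, Pi.neg_apply, neg_mul, Finset.sum_neg_distrib,
    neg_eq_iff_eq_neg]

theorem IMin_eq (K : Set (Fin d → ℝ)) (c : Fin d → ℤ) :
    IMin K c = ((sInf (AR c K) : ℤ) : ℝ) - sInf (dotL c '' K) :=
  rfl

theorem IMin_eq_IMax_neg (K : Set (Fin d → ℝ)) (c : Fin d → ℤ) : IMin K c = IMax K (-c) := by
  rw [IMin_eq, IMax_eq, image_dotL_neg, AR_neg, Real.sSup_neg, Int.sSup_neg]
  push_cast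
  ring

section IntegralityGap

variable {K L : Set (Fin d → ℝ)} {c : Fin d → ℤ}

theorem Set.Nonempty.of_intPts (h : (intPts K).Nonempty) : K.Nonempty :=
  let ⟨_, hx⟩ := h
  ⟨_, hx⟩

theorem AR_nonempty (h : (intPts K).Nonempty) : (AR c K).Nonempty :=
  let ⟨x, hx⟩ := h
  ⟨_, x, hx, rfl⟩

theorem intCast_mem_image_dotL {n : ℤ} (hn : n ∈ AR c K) : (n : ℝ) ∈ dotL c '' K := by
  obtain ⟨x, hx, rfl⟩ := hn
  exact ⟨_, hx, dotL_intCast c x⟩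

theorem bddAbove_image_dotL (hK : IsCompact K) : BddAbove (dotL c '' K) :=
  (hK.image (dotL c).continuous_of_finiteDimensional).bddAbove

theorem bddAbove_AR (hK : IsCompact K) : BddAbove (AR c K) := by
  refine ⟨⌈sSup (dotL c '' K)⌉, fun n hn => ?_⟩
  exact_mod_cast (le_csSup (bddAbove_image_dotL hK) (intCast_mem_image_dotL hn)).trans
    (Int.le_ceil _)

theorem sSup_AR_le (hK : IsCompact K) (hKZ : (intPts K).Nonempty) :
    ((sSup (AR c K) : ℤ) : ℝ) ≤ sSup (dotL c '' K) :=
  le_csSup (bddAbove_image_dotL hK)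
    (intCast_mem_image_dotL (Int.csSup_mem (AR_nonempty hKZ) (bddAbove_AR hK)))

theorem IMax_nonneg (hK : IsCompact K) (hKZ : (intPts K).Nonempty) : 0 ≤ IMax K c :=
  sub_nonneg.2 (sSup_AR_le hK hKZ)

theorem intPts_add_subset : intPts K + intPts L ⊆ intPts (K + L) := by
  rintro _ ⟨x, hx, y, hy, rfl⟩
  exact ⟨_, hx, _, hy, by ext; simp⟩

theorem AR_add_subset : AR c K + AR c L ⊆ AR c (K + L) := by
  rintro _ ⟨_, ⟨x, hx, rfl⟩, _, ⟨y, hy, rfl⟩, rfl⟩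
  exact ⟨x + y, intPts_add_subset ⟨x, hx, y, hy, rfl⟩, by simp [mul_add, Finset.sum_add_distrib]⟩

theorem sSup_AR_add_le (hK : IsCompact K) (hL : IsCompact L) (hKZ : (intPts K).Nonempty)
    (hLZ : (intPts L).Nonempty) : sSup (AR c K) + sSup (AR c L) ≤ sSup (AR c (K + L)) := by
  rw [← csSup_add (AR_nonempty hKZ) (bddAbove_AR hK) (AR_nonempty hLZ) (bddAbove_AR hL)]
  exact csSup_le_csSup (bddAbove_AR (hK.add hL)) ((AR_nonempty hKZ).add (AR_nonempty hLZ))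
    AR_add_subset

/-- Real maxima are additive over a Minkowski sum, lattice maxima only superadditive. -/
theorem exists_nat_IMax_add_IMax_eq (hK : IsCompact K) (hL : IsCompact L)
    (hKZ : (intPts K).Nonempty) (hLZ : (intPts L).Nonempty) :
    ∃ n : ℕ, IMax K c + IMax L c = IMax (K + L) c + n := by
  obtain ⟨n, hn⟩ :=
    Int.eq_ofNat_of_zero_le (sub_nonneg.2 (sSup_AR_add_le (c := c) hK hL hKZ hLZ))
  rw [sub_eq_iff_eq_add'] at hn
  refine ⟨n, ?_⟩
  rw [IMax_eq, IMax_eq, IMax_eq, hn, Set.image_add, csSup_add (hKZ.of_intPts.image _)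
    (bddAbove_image_dotL hK) (hLZ.of_intPts.image _) (bddAbove_image_dotL hL)]
  push_cast
  ring

end IntegralityGap

namespace IsIntPolytope

variable {Q : Set (Fin d → ℝ)}

theorem isCompact (hQ : IsIntPolytope Q) : IsCompact Q := by
  obtain ⟨V, -, rfl⟩ := hQ
  exact (V.finite_toSet.image _).isCompact_convexHull (𝕜 := ℝ)

theorem convex (hQ : IsIntPolytope Q) : Convex ℝ Q := by
  obtain ⟨V, -, rfl⟩ := hQ
  exact convex_convexHull ℝ _

theorem intPts_nonempty (hQ : IsIntPolytope Q) : (intPts Q).Nonempty := by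
  obtain ⟨V, ⟨v, hv⟩, rfl⟩ := hQ
  exact ⟨v, subset_convexHull ℝ _ ⟨v, hv, rfl⟩⟩

/-- A linear functional attains its maximum over a polytope at a vertex. -/
theorem exists_intPts_isGreatest (hQ : IsIntPolytope Q) (c : Fin d → ℤ) :
    ∃ w ∈ intPts Q, IsGreatest (dotL c '' Q) (dotL c (fun i => (w i : ℝ))) := by
  obtain ⟨V, hV, rfl⟩ := hQ
  obtain ⟨w, hwV, hw⟩ := V.exists_max_image (fun v => dotL c (fun i => (v i : ℝ))) hV
  refine ⟨w, subset_convexHull ℝ _ ⟨w, hwV, rfl⟩,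
    ⟨_, subset_convexHull ℝ _ ⟨w, hwV, rfl⟩, rfl⟩, ?_⟩
  rintro _ ⟨x, hx, rfl⟩
  obtain ⟨_, ⟨v, hv, rfl⟩, hxv⟩ :=
    ((dotL c).convexOn convex_univ).exists_ge_of_mem_convexHull (Set.subset_univ _) hx
  exact hxv.trans (hw v hv)

theorem IMax_eq_zero (hQ : IsIntPolytope Q) (c : Fin d → ℤ) : IMax Q c = 0 := by
  obtain ⟨w, hwQ, hw⟩ := hQ.exists_intPts_isGreatest c
  refine le_antisymm ?_ (IMax_nonneg hQ.isCompact hQ.intPts_nonempty)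
  rw [IMax_eq, hw.csSup_eq, dotL_intCast, sub_nonpos, Int.cast_le]
  exact le_csSup (bddAbove_AR hQ.isCompact) ⟨w, hwQ, rfl⟩

end IsIntPolytope

section Dilates

variable {P : Set (Fin d → ℝ)} {c : Fin d → ℤ}

theorem convex_of_isIntPolytope_smul {t : ℝ} (ht : t ≠ 0) (hQ : IsIntPolytope (t • P)) :
    Convex ℝ P := by
  simpa only [inv_smul_smul₀ ht] using hQ.convex.smul t⁻¹

theorem isCompact_of_isIntPolytope_smul {t : ℝ} (ht : t ≠ 0) (hQ : IsIntPolytope (t • P)) :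
    IsCompact P := by
  simpa only [inv_smul_smul₀ ht] using hQ.isCompact.smul t⁻¹

theorem intPts_add_smul_nonempty (hP : Convex ℝ P) {s t : ℝ} (hs : 0 ≤ s) (ht : 0 ≤ t)
    (hQ : IsIntPolytope (t • P)) (hsZ : (intPts (s • P)).Nonempty) :
    (intPts ((s + t) • P)).Nonempty := by
  rw [hP.add_smul hs ht]
  exact (hsZ.add hQ.intPts_nonempty).mono intPts_add_subset

theorem exists_nat_IMax_smul_eq_IMax_add_smul (hP : Convex ℝ P) (hPc : IsCompact P) {s t : ℝ}
    (hs : 0 ≤ s) (ht : 0 ≤ t) (hQ : IsIntPolytope (t • P)) (hsZ : (intPts (s • P)).Nonempty) :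
    ∃ n : ℕ, IMax (s • P) c = IMax ((s + t) • P) c + n := by
  obtain ⟨n, hn⟩ :=
    exists_nat_IMax_add_IMax_eq (c := c) (hPc.smul s) (hPc.smul t) hsZ hQ.intPts_nonempty
  rw [hQ.IMax_eq_zero, add_zero, ← hP.add_smul hs ht] at hn
  exact ⟨n, hn⟩

end Dilates

theorem exists_forall_ge_eq_of_eq_succ_add_nat {g : ℕ → ℝ} {b : ℝ} (hb : ∀ k, b ≤ g k)
    (hstep : ∀ k, ∃ n : ℕ, g k = g (k + 1) + n) : ∃ K, ∀ k, K ≤ k → g k = g K := by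
  choose n hn using hstep
  set u : ℕ → ℕ := fun k => ∑ j ∈ Finset.range k, n j
  have hgu : ∀ k, g k = g 0 - u k := by
    intro k
    induction k with
    | zero => simp [u]
    | succ k ih =>
      simp only [u, Finset.sum_range_succ, Nat.cast_add] at ih ⊢
      linarith [hn k]
  have hu : BddAbove (Set.range u) :=
    ⟨⌊g 0 - b⌋₊, by rintro _ ⟨k, rfl⟩; exact Nat.le_floor (by linarith [hgu k, hb k])⟩
  obtain ⟨K, hK⟩ := Nat.sSup_mem (Set.range_nonempty u) hu
  refine ⟨K, fun k hk => ?_⟩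
  have huk : u k = u K :=
    le_antisymm (hK ▸ le_csSup hu ⟨k, rfl⟩) (Finset.sum_le_sum_of_subset (Finset.range_mono hk))
  rw [hgu k, hgu K, huk]

section Periodicity

variable {P : Set (Fin d → ℝ)} {D : ℕ}

theorem exists_IMax_smul_eq_of_modEq (hD : 0 < D) (hQ : IsIntPolytope ((D : ℝ) • P))
    (c : Fin d → ℤ) {t₀ : ℕ} (h₀ : (intPts ((t₀ : ℝ) • P)).Nonempty) :
    ∃ N v, ∀ t : ℕ, N ≤ t → t ≡ t₀ [MOD D] → IMax ((t : ℝ) • P) c = v := by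
  have hD' : (D : ℝ) ≠ 0 := by positivity
  have hP := convex_of_isIntPolytope_smul hD' hQ
  have hPc := isCompact_of_isIntPolytope_smul hD' hQ
  set s : ℕ → ℝ := fun k => t₀ + k * D
  have hs : ∀ k, 0 ≤ s k := fun k => by positivity
  have hs_succ : ∀ k, s (k + 1) = s k + D := fun k => by simp only [s]; push_cast; ring
  have hZ : ∀ k, (intPts (s k • P)).Nonempty := by
    intro k
    induction k with
    | zero => simpa [s] using h₀
    | succ k ih => rw [hs_succ]; exact intPts_add_smul_nonempty hP (hs k) D.cast_nonneg hQ ih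
  obtain ⟨K, hK⟩ := exists_forall_ge_eq_of_eq_succ_add_nat (g := fun k => IMax (s k • P) c)
    (fun k => IMax_nonneg (hPc.smul _) (hZ k)) fun k => by
      simpa only [hs_succ] using
        exists_nat_IMax_smul_eq_IMax_add_smul hP hPc (hs k) D.cast_nonneg hQ (hZ k)
  refine ⟨t₀ + K * D, IMax (s K • P) c, fun t ht hmod => ?_⟩
  have ht₀ : t₀ ≤ t := le_of_add_le_left ht
  obtain ⟨k, hk⟩ := (Nat.modEq_iff_dvd' ht₀).1 hmod.symm
  have ht_eq : t = t₀ + k * D := by rw [mul_comm, ← hk, Nat.add_sub_cancel' ht₀]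
  have hKk : K ≤ k := Nat.le_of_mul_le_mul_right (by omega) hD
  rw [← hK k hKk, ht_eq]
  simp [s]

theorem exists_IMax_smul_periodic (hD : 0 < D) (hQ : IsIntPolytope ((D : ℝ) • P))
    (c : Fin d → ℤ) :
    ∃ N, ∀ t₁ t₂ : ℕ, N ≤ t₁ → N ≤ t₂ → t₁ ≡ t₂ [MOD D] →
      (intPts ((t₁ : ℝ) • P)).Nonempty → IMax ((t₁ : ℝ) • P) c = IMax ((t₂ : ℝ) • P) c := by
  have hclass : ∀ r, ∃ N, ∀ t₁ t₂ : ℕ, N ≤ t₁ → N ≤ t₂ → t₁ % D = r → t₂ % D = r →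
      (intPts ((t₁ : ℝ) • P)).Nonempty → IMax ((t₁ : ℝ) • P) c = IMax ((t₂ : ℝ) • P) c := by
    intro r
    by_cases h : ∃ t₀, t₀ % D = r ∧ (intPts ((t₀ : ℝ) • P)).Nonempty
    · obtain ⟨t₀, rfl, h₀⟩ := h
      obtain ⟨N, v, hN⟩ := exists_IMax_smul_eq_of_modEq hD hQ c h₀
      exact ⟨N, fun t₁ t₂ h₁ h₂ hr₁ hr₂ _ => (hN t₁ h₁ hr₁).trans (hN t₂ h₂ hr₂).symm⟩
    · exact ⟨0, fun t₁ _ _ _ hr₁ _ hZ => absurd ⟨t₁, hr₁, hZ⟩ h⟩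
  choose N hN using hclass
  refine ⟨(Finset.range D).sup N, fun t₁ t₂ h₁ h₂ hmod hZ => ?_⟩
  have hle : N (t₁ % D) ≤ (Finset.range D).sup N :=
    Finset.le_sup (Finset.mem_range.2 (Nat.mod_lt _ hD))
  exact hN _ t₁ t₂ (hle.trans h₁) (hle.trans h₂) rfl hmod.symm hZ

end Periodicity

theorem integrality_gaps_eventually_periodic_general {d : ℕ} (P : Set (Fin d → ℝ))
    (D : ℕ) (hD : IsDenom P D) (c : Fin d → ℤ) :
    ∃ N : ℕ, ∀ t₁ t₂ : ℕ, N ≤ t₁ → N ≤ t₂ → t₁ % D = t₂ % D →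
      (intPts ((t₁ : ℝ) • P)).Nonempty → (intPts ((t₂ : ℝ) • P)).Nonempty →
      IMax ((t₁ : ℝ) • P) c = IMax ((t₂ : ℝ) • P) c ∧
      IMin ((t₁ : ℝ) • P) c = IMin ((t₂ : ℝ) • P) c := by
  obtain ⟨hD₀, hQ, -⟩ := hD
  obtain ⟨N₁, hN₁⟩ := exists_IMax_smul_periodic hD₀ hQ c
  obtain ⟨N₂, hN₂⟩ := exists_IMax_smul_periodic hD₀ hQ (-c)
  refine ⟨max N₁ N₂, fun t₁ t₂ h₁ h₂ hmod hZ _ => ⟨?_, ?_⟩⟩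
  · exact hN₁ t₁ t₂ (le_of_max_le_left h₁) (le_of_max_le_left h₂) hmod hZ
  · rw [IMin_eq_IMax_neg, IMin_eq_IMax_neg]
    exact hN₂ t₁ t₂ (le_of_max_le_right h₁) (le_of_max_le_right h₂) hmod hZ

/-- for a rational polytope `P` with denominator `D` and a nonzero
`c ∈ ℤ^d`, the additive integrality gaps of the dilates `nP` in direction `c` are
eventually periodic in `n` with period dividing `D`. -/
theorem integrality_gaps_eventually_periodic {d : ℕ} (P : Set (Fin d → ℝ))
    (hP : IsRatPolytope P) (D : ℕ) (hD : IsDenom P D) (c : Fin d → ℤ) (hc : c ≠ 0) :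
    ∃ N : ℕ, ∀ t₁ t₂ : ℕ, N ≤ t₁ → N ≤ t₂ → t₁ % D = t₂ % D →
      (intPts ((t₁ : ℝ) • P)).Nonempty → (intPts ((t₂ : ℝ) • P)).Nonempty →
      IMax ((t₁ : ℝ) • P) c = IMax ((t₂ : ℝ) • P) c ∧
      IMin ((t₁ : ℝ) • P) c = IMin ((t₂ : ℝ) • P) c :=
  integrality_gaps_eventually_periodic_general P D hD c
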